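/- Let α ∈ k with f(α) = 0 and g(α) ≠ 0. The quotient of P(f,g) by the two-sided ideal generated by c − α is isomorphic as a k-algebra to the universal enveloping algebra of the two-dimensional solvable Lie algebra, presented as the k-algebra generated by x, y subject to the single relation x·y = y·x + y, via the map induced by a ↦ g(α)·x, d ↦ g(α)·x + y, c ↦ α. -/
import Mathlib

open Polynomial

noncomputable section

/-- Defining relations of `P(f,g)`: with `a = ι 0`, `c = ι 1`, `d = ι 2`,
`a·c = c·a + f(c)`, `d·c = c·d + f(c)`, `d·a = (a − g(c))·d + g(c)·a`. -/
inductive PRel (k : Type) [Field k] (f g : k[X]) :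
    FreeAlgebra k (Fin 3) → FreeAlgebra k (Fin 3) → Prop
  | ac : PRel k f g (FreeAlgebra.ι k 0 * FreeAlgebra.ι k 1)
      (FreeAlgebra.ι k 1 * FreeAlgebra.ι k 0 + aeval (FreeAlgebra.ι k 1) f)
  | dc : PRel k f g (FreeAlgebra.ι k 2 * FreeAlgebra.ι k 1)
      (FreeAlgebra.ι k 1 * FreeAlgebra.ι k 2 + aeval (FreeAlgebra.ι k 1) f)
  | da : PRel k f g (FreeAlgebra.ι k 2 * FreeAlgebra.ι k 0)
      ((FreeAlgebra.ι k 0 - aeval (FreeAlgebra.ι k 1) g) * FreeAlgebra.ι k 2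
        + aeval (FreeAlgebra.ι k 1) g * FreeAlgebra.ι k 0)

/-- The algebra `P(f,g)`. -/
abbrev PAlg (k : Type) [Field k] (f g : k[X]) := RingQuot (PRel k f g)

/-- The generator `a` of `P(f,g)`. -/
def Pa (k : Type) [Field k] (f g : k[X]) : PAlg k f g :=
  RingQuot.mkAlgHom k (PRel k f g) (FreeAlgebra.ι k 0)

/-- The generator `c` of `P(f,g)`. -/
def Pc (k : Type) [Field k] (f g : k[X]) : PAlg k f g :=
  RingQuot.mkAlgHom k (PRel k f g) (FreeAlgebra.ι k 1)

/-- The generator `d` of `P(f,g)`. -/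
def Pd (k : Type) [Field k] (f g : k[X]) : PAlg k f g :=
  RingQuot.mkAlgHom k (PRel k f g) (FreeAlgebra.ι k 2)

/-- The element `u = d - a` of `P(f,g)`. -/
def Pu (k : Type) [Field k] (f g : k[X]) : PAlg k f g := Pd k f g - Pa k f g

/-- The relation identifying `c - α` with `0`; quotienting `P(f,g)` by it realizes
the quotient by the two-sided ideal generated by `c - α`. -/
inductive CRel (k : Type) [Field k] (f g : k[X]) (α : k) : PAlg k f g → PAlg k f g → Prop
  | c : CRel k f g α (Pc k f g - algebraMap k (PAlg k f g) α) 0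

/-- Defining relation of the universal enveloping algebra of the two-dimensional solvable
Lie algebra: with `x = ι 0`, `y = ι 1`, `x·y = y·x + y`. -/
inductive URel2 (k : Type) [Field k] :
    FreeAlgebra k (Fin 2) → FreeAlgebra k (Fin 2) → Prop
  | xy : URel2 k (FreeAlgebra.ι k 0 * FreeAlgebra.ι k 1)
      (FreeAlgebra.ι k 1 * FreeAlgebra.ι k 0 + FreeAlgebra.ι k 1)

/-- The universal enveloping algebra of the two-dimensional solvable Lie algebra. -/
abbrev UL (k : Type) [Field k] := RingQuot (URel2 k)

namespace Stmt7Aux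

variable (k : Type) [Field k] (f g : k[X]) (α : k)

/-- Generator x of UL. -/
def Ux : UL k := RingQuot.mkAlgHom k (URel2 k) (FreeAlgebra.ι k 0)
/-- Generator y of UL. -/
def Uy : UL k := RingQuot.mkAlgHom k (URel2 k) (FreeAlgebra.ι k 1)

lemma hXY : Ux k * Uy k = Uy k * Ux k + Uy k := by
  have := RingQuot.mkAlgHom_rel k (URel2.xy (k := k))
  simpa [map_mul, map_add, Ux, Uy] using this

/-- The forward map on the free algebra. -/
def fwdFree : FreeAlgebra k (Fin 3) →ₐ[k] UL k :=
  FreeAlgebra.lift k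
    ![algebraMap k (UL k) (g.eval α) * Ux k,
      algebraMap k (UL k) α,
      algebraMap k (UL k) (g.eval α) * Ux k + Uy k]

lemma fwdFree_0 : fwdFree k g α (FreeAlgebra.ι k 0) = algebraMap k (UL k) (g.eval α) * Ux k := by
  rw [fwdFree, FreeAlgebra.lift_ι_apply]; rfl

lemma fwdFree_1 : fwdFree k g α (FreeAlgebra.ι k 1) = algebraMap k (UL k) α := by
  rw [fwdFree, FreeAlgebra.lift_ι_apply]; rfl

lemma fwdFree_2 : fwdFree k g α (FreeAlgebra.ι k 2) =
    algebraMap k (UL k) (g.eval α) * Ux k + Uy k := by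
  rw [fwdFree, FreeAlgebra.lift_ι_apply]; rfl

lemma fwdFree_aeval (p : k[X]) :
    fwdFree k g α (aeval (FreeAlgebra.ι k 1) p) = algebraMap k (UL k) (p.eval α) := by
  rw [← Polynomial.aeval_algHom_apply, fwdFree_1,
    Polynomial.aeval_algebraMap_apply_eq_algebraMap_eval]

/-- The forward map from `P(f,g)`. -/
def fwdP (hfα : f.eval α = 0) : PAlg k f g →ₐ[k] UL k :=
  RingQuot.liftAlgHom k ⟨fwdFree k g α, by
    rintro x y (h | h | h)
    · rw [map_mul, map_add, map_mul, fwdFree_aeval, fwdFree_0, fwdFree_1, hfα, map_zero,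
        add_zero]
      exact (Algebra.commutes α _).symm
    · rw [map_mul, map_add, map_mul, fwdFree_aeval, fwdFree_2, fwdFree_1, hfα, map_zero,
        add_zero]
      exact (Algebra.commutes α _).symm
    · rw [map_mul, map_add, map_mul, map_mul, map_sub, fwdFree_aeval, fwdFree_0, fwdFree_2]
      have hYs : Uy k * algebraMap k (UL k) (g.eval α) =
          algebraMap k (UL k) (g.eval α) * Uy k := (Algebra.commutes _ _).symm
      have hxy : Ux k * Uy k = Uy k * Ux k + Uy k := hXY k
      set s := algebraMap k (UL k) (g.eval α)
      set X := Ux k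
      set Y := Uy k
      rw [add_mul, ← mul_assoc Y s, hYs, sub_mul, mul_add (s * X), mul_assoc s X Y, hxy]
      noncomm_ring⟩

/-- The forward map from the quotient. -/
def fwd (hfα : f.eval α = 0) : RingQuot (CRel k f g α) →ₐ[k] UL k :=
  RingQuot.liftAlgHom k ⟨fwdP k f g α hfα, by
    rintro x y ⟨⟩
    rw [map_sub, map_zero, AlgHom.commutes]
    have : fwdP k f g α hfα (Pc k f g) = algebraMap k (UL k) α := by
      rw [Pc, fwdP, RingQuot.liftAlgHom_mkAlgHom_apply, fwdFree_1]
    rw [this, sub_self]⟩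

def QA : RingQuot (CRel k f g α) := RingQuot.mkAlgHom k (CRel k f g α) (Pa k f g)
def QC : RingQuot (CRel k f g α) := RingQuot.mkAlgHom k (CRel k f g α) (Pc k f g)
def QD : RingQuot (CRel k f g α) := RingQuot.mkAlgHom k (CRel k f g α) (Pd k f g)

lemma QC_eq : QC k f g α = algebraMap k _ α := by
  have := RingQuot.mkAlgHom_rel k (CRel.c (k := k) (f := f) (g := g) (α := α))
  rw [map_sub, map_zero, sub_eq_zero, AlgHom.commutes] at this
  simpa [QC] using this

lemma QG_eq : RingQuot.mkAlgHom k (CRel k f g α)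
    (RingQuot.mkAlgHom k (PRel k f g) (aeval (FreeAlgebra.ι k 1) g)) =
    algebraMap k _ (g.eval α) := by
  rw [← Polynomial.aeval_algHom_apply, ← Polynomial.aeval_algHom_apply]
  have h1 : RingQuot.mkAlgHom k (CRel k f g α)
      (RingQuot.mkAlgHom k (PRel k f g) (FreeAlgebra.ι k 1)) = algebraMap k _ α :=
    QC_eq k f g α
  rw [h1, Polynomial.aeval_algebraMap_apply_eq_algebraMap_eval]

lemma QDA : QD k f g α * QA k f g α =
    (QA k f g α - algebraMap k _ (g.eval α)) * QD k f g α
      + algebraMap k _ (g.eval α) * QA k f g α := by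
  have h2 := congrArg (RingQuot.mkAlgHom k (CRel k f g α))
    (RingQuot.mkAlgHom_rel k (PRel.da (k := k) (f := f) (g := g)))
  simp only [map_mul, map_add, map_sub] at h2
  rw [QG_eq] at h2
  exact h2

/-- The backward map on the free algebra. -/
def bwdFree : FreeAlgebra k (Fin 2) →ₐ[k] RingQuot (CRel k f g α) :=
  FreeAlgebra.lift k ![(g.eval α)⁻¹ • QA k f g α, QD k f g α - QA k f g α]

lemma bwdFree_0 :
    bwdFree k f g α (FreeAlgebra.ι k 0) = (g.eval α)⁻¹ • QA k f g α := by
  rw [bwdFree, FreeAlgebra.lift_ι_apply]; rfl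

lemma bwdFree_1 :
    bwdFree k f g α (FreeAlgebra.ι k 1) = QD k f g α - QA k f g α := by
  rw [bwdFree, FreeAlgebra.lift_ι_apply]; rfl

lemma key (hgα : g.eval α ≠ 0) : QA k f g α * (QD k f g α - QA k f g α) =
    (QD k f g α - QA k f g α) * QA k f g α
      + algebraMap k _ (g.eval α) * (QD k f g α - QA k f g α) := by
  have h := QDA k f g α
  rw [mul_sub (QA k f g α) (QD k f g α) (QA k f g α),
    sub_mul (QD k f g α) (QA k f g α) (QA k f g α),
    mul_sub (algebraMap k (RingQuot (CRel k f g α)) (g.eval α)) (QD k f g α) (QA k f g α), h,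
    sub_mul (QA k f g α) (algebraMap k (RingQuot (CRel k f g α)) (g.eval α)) (QD k f g α)]
  abel

/-- The backward map. -/
def bwd (hgα : g.eval α ≠ 0) : UL k →ₐ[k] RingQuot (CRel k f g α) :=
  RingQuot.liftAlgHom k ⟨bwdFree k f g α, by
    rintro x y ⟨⟩
    rw [map_mul, map_add, map_mul, bwdFree_0, bwdFree_1]
    rw [smul_mul_assoc, mul_smul_comm, key k f g α hgα, smul_add, ← Algebra.smul_def,
      smul_smul, inv_mul_cancel₀ hgα, one_smul]⟩

variable (hfα : f.eval α = 0)

lemma fwd_QA : fwd k f g α hfα (QA k f g α) = algebraMap k (UL k) (g.eval α) * Ux k := by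
  rw [QA, fwd, RingQuot.liftAlgHom_mkAlgHom_apply, Pa, fwdP,
    RingQuot.liftAlgHom_mkAlgHom_apply, fwdFree_0]

lemma fwd_QC : fwd k f g α hfα (QC k f g α) = algebraMap k (UL k) α := by
  rw [QC, fwd, RingQuot.liftAlgHom_mkAlgHom_apply, Pc, fwdP,
    RingQuot.liftAlgHom_mkAlgHom_apply, fwdFree_1]

lemma fwd_QD : fwd k f g α hfα (QD k f g α) =
    algebraMap k (UL k) (g.eval α) * Ux k + Uy k := by
  rw [QD, fwd, RingQuot.liftAlgHom_mkAlgHom_apply, Pd, fwdP,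
    RingQuot.liftAlgHom_mkAlgHom_apply, fwdFree_2]

lemma bwd_Ux (hgα : g.eval α ≠ 0) :
    bwd k f g α hgα (Ux k) = (g.eval α)⁻¹ • QA k f g α := by
  rw [Ux, bwd, RingQuot.liftAlgHom_mkAlgHom_apply, bwdFree_0]

lemma bwd_Uy (hgα : g.eval α ≠ 0) :
    bwd k f g α hgα (Uy k) = QD k f g α - QA k f g α := by
  rw [Uy, bwd, RingQuot.liftAlgHom_mkAlgHom_apply, bwdFree_1]

end Stmt7Aux

open Stmt7Aux in
theorem stmt7 (k : Type) [Field k] [IsAlgClosed k] [CharZero k] (f g : k[X])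
    (α : k) (hfα : f.eval α = 0) (hgα : g.eval α ≠ 0) :
    ∃ e : RingQuot (CRel k f g α) ≃ₐ[k] UL k,
      e (RingQuot.mkAlgHom k (CRel k f g α) (Pa k f g)) =
        algebraMap k (UL k) (g.eval α) *
          RingQuot.mkAlgHom k (URel2 k) (FreeAlgebra.ι k 0) ∧
      e (RingQuot.mkAlgHom k (CRel k f g α) (Pd k f g)) =
        algebraMap k (UL k) (g.eval α) *
          RingQuot.mkAlgHom k (URel2 k) (FreeAlgebra.ι k 0) +
          RingQuot.mkAlgHom k (URel2 k) (FreeAlgebra.ι k 1) ∧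
      e (RingQuot.mkAlgHom k (CRel k f g α) (Pc k f g)) = algebraMap k (UL k) α := by
  refine ⟨AlgEquiv.ofAlgHom (fwd k f g α hfα) (bwd k f g α hgα) ?_ ?_, ?_, ?_, ?_⟩
  · apply RingQuot.ringQuot_ext'
    apply FreeAlgebra.hom_ext
    funext i
    fin_cases i
    · show (fwd k f g α hfα) ((bwd k f g α hgα) (Ux k)) = Ux k
      rw [bwd_Ux k f g α hgα, map_smul, fwd_QA, ← Algebra.smul_def, smul_smul,
        inv_mul_cancel₀ hgα, one_smul]
    · show (fwd k f g α hfα) ((bwd k f g α hgα) (Uy k)) = Uy k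
      rw [bwd_Uy k f g α hgα, map_sub (fwd k f g α hfα) (QD k f g α) (QA k f g α),
        fwd_QA, fwd_QD, add_sub_cancel_left]
  · apply RingQuot.ringQuot_ext'
    apply RingQuot.ringQuot_ext'
    apply FreeAlgebra.hom_ext
    funext i
    fin_cases i
    · show (bwd k f g α hgα) ((fwd k f g α hfα) (QA k f g α)) = QA k f g α
      rw [fwd_QA, map_mul, AlgHom.commutes, bwd_Ux k f g α hgα,
        ← Algebra.smul_def, smul_smul, mul_inv_cancel₀ hgα, one_smul]
    · show (bwd k f g α hgα) ((fwd k f g α hfα) (QC k f g α)) = QC k f g α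
      rw [QC_eq, AlgHom.commutes, AlgHom.commutes]
    · show (bwd k f g α hgα) ((fwd k f g α hfα) (QD k f g α)) = QD k f g α
      rw [fwd_QD, map_add, map_mul, AlgHom.commutes, bwd_Ux k f g α hgα,
        bwd_Uy k f g α hgα, ← Algebra.smul_def, smul_smul, mul_inv_cancel₀ hgα, one_smul,
        add_sub_cancel (QA k f g α) (QD k f g α)]
  · exact fwd_QA k f g α hfα
  · exact fwd_QD k f g α hfα
  · exact fwd_QC k f g α hfα
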